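/- Assume f satisfies (H₂): |f(t,x) − f(t,y)| ≤ g(t)·Φ^{−1}·ln(1 + |x − y|) for all t ∈ [0,1] and all x, y ∈ ℝ. Then for all x, y ∈ C([0,1],ℝ) one has ‖𝒜x − 𝒜y‖ ≤ ln(1 + ‖x − y‖); in particular 𝒜 is a nonlinear contraction with gauge function ψ(α) = ln(1 + α). -/

import Mathlib

open MeasureTheory intervalIntegral

noncomputable def Δ₁ (σ ν ξ : ℝ) (n : ℕ) (η α : ℕ → ℝ) : ℝ :=
  ξ ^ (1 - σ) * Real.Gamma (2 - ν) -
    Real.Gamma (2 - σ) * ∑ i ∈ Finset.Icc 1 n, α i * η i ^ (1 - ν)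

noncomputable def Δ₂ (n : ℕ) (η β γ : ℕ → ℝ) : ℝ :=
  1 - ∑ i ∈ Finset.Icc 1 n, (β i * η i + γ i)

noncomputable def Δ₃ (n : ℕ) (η β γ : ℕ → ℝ) : ℝ :=
  -2 + ∑ i ∈ Finset.Icc 1 n, η i * (β i * η i + 2 * γ i)

/-- The operator 𝒜 of the paper, acting on (the continuous extension of) a
continuous function on `[0,1]`. -/
noncomputable def opA (q σ ν ξ : ℝ) (n : ℕ) (η α β γ : ℕ → ℝ)
    (f : ℝ → ℝ → ℝ) (x : ℝ → ℝ) (t : ℝ) : ℝ :=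
  (∫ s in (0:ℝ)..t, (t - s) ^ (q - 1) / Real.Gamma q * f s (x s)) +
  (1 / Δ₂ n η β γ) *
    (-(∫ s in (0:ℝ)..1, (1 - s) ^ (q - 1) / Real.Gamma q * f s (x s)) +
     (∑ i ∈ Finset.Icc 1 n, β i *
        ∫ s in (0:ℝ)..η i, (η i - s) ^ q / Real.Gamma (q + 1) * f s (x s)) +
     ∑ i ∈ Finset.Icc 1 n, γ i *
        ∫ s in (0:ℝ)..η i, (η i - s) ^ (q - 1) / Real.Gamma q * f s (x s)) +
  Real.Gamma (2 - σ) * Real.Gamma (2 - ν) * (Δ₃ n η β γ + 2 * Δ₂ n η β γ * t) /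
      (2 * Δ₁ σ ν ξ n η α * Δ₂ n η β γ) *
    (-(∫ s in (0:ℝ)..ξ, (ξ - s) ^ (q - σ - 1) / Real.Gamma (q - σ) * f s (x s)) +
     ∑ i ∈ Finset.Icc 1 n, α i *
        ∫ s in (0:ℝ)..η i, (η i - s) ^ (q - ν - 1) / Real.Gamma (q - ν) * f s (x s))

noncomputable def Θ (q σ ν ξ : ℝ) (n : ℕ) (η α β γ : ℕ → ℝ) : ℝ :=
  1 / Real.Gamma (q + 1) +
  1 / (|Δ₂ n η β γ| * Real.Gamma (q + 2)) *
    (1 + q + ∑ i ∈ Finset.Icc 1 n, η i ^ q * (η i * |β i| + (q + 1) * |γ i|)) +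
  Real.Gamma (2 - σ) * Real.Gamma (2 - ν) * (|Δ₃ n η β γ| + 2 * |Δ₂ n η β γ|) /
      (2 * |Δ₁ σ ν ξ n η α * Δ₂ n η β γ|) *
    (ξ ^ (q - σ) / Real.Gamma (q - σ + 1) +
     ∑ i ∈ Finset.Icc 1 n, |α i| * η i ^ (q - ν) / Real.Gamma (q - ν + 1))


noncomputable def Φ (q σ ν ξ : ℝ) (n : ℕ) (η α β γ : ℕ → ℝ) (g : ℝ → ℝ) : ℝ :=
  (1 + 1 / |Δ₂ n η β γ|) * (∫ s in (0:ℝ)..1, (1 - s) ^ (q - 1) / Real.Gamma q * g s) +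
  (1 / |Δ₂ n η β γ|) * (∑ i ∈ Finset.Icc 1 n,
    ∫ s in (0:ℝ)..η i, (η i - s) ^ (q - 1) / Real.Gamma (q + 1) *
      (q * |γ i| + |β i| * (η i - s)) * g s) +
  Real.Gamma (2 - σ) * Real.Gamma (2 - ν) * (|Δ₃ n η β γ| + 2 * |Δ₂ n η β γ|) /
      (2 * |Δ₁ σ ν ξ n η α * Δ₂ n η β γ|) *
    ((∫ s in (0:ℝ)..ξ, (ξ - s) ^ (q - σ - 1) / Real.Gamma (q - σ) * g s) +
     ∑ i ∈ Finset.Icc 1 n, |α i| *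
        ∫ s in (0:ℝ)..η i, (η i - s) ^ (q - ν - 1) / Real.Gamma (q - ν) * g s)

/-!
`𝒜x` and `𝒜y` are the same linear combination of Riemann–Liouville integrals
`I^p h (a) = ∫₀^a (a - s)^(p-1) / Γ(p) · h(s) ds` (orders `q, q+1, q-σ, q-ν` at the points
`t, 1, ξ, η_i`), applied to `h = f(·, x(·))` and to `h = f(·, y(·))`. By (H₂) these differ
pointwise by at most `K g` with `K = Φ⁻¹ ln(1 + ‖x - y‖)`, and as the kernels are nonnegative each
difference of Riemann–Liouville integrals is at most `K I^p g (a)`. Replacing the coefficients by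
their absolute values, `|Δ₃ + 2Δ₂t| ≤ |Δ₃| + 2|Δ₂|` and `I^q g (t) ≤ I^q g (1)` then give exactly
`K Φ = ln(1 + ‖x - y‖)`; in `Φ` the `β_i`- and `γ_i`-terms are merged into one integral using
`Γ(q+1) = q Γ(q)`.
-/

open Set

noncomputable def riemannLiouville (p : ℝ) (h : ℝ → ℝ) (a : ℝ) : ℝ :=
  ∫ s in (0:ℝ)..a, (a - s) ^ (p - 1) / Real.Gamma p * h s

section RiemannLiouville

variable {p a : ℝ} {h h₁ h₂ g : ℝ → ℝ}

lemma intervalIntegrable_riemannLiouville_integrand (hp : 0 < p) (ha : 0 ≤ a)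
    (hh : ContinuousOn h (Icc 0 a)) :
    IntervalIntegrable (fun s => (a - s) ^ (p - 1) / Real.Gamma p * h s) volume 0 a := by
  have hkernel : IntervalIntegrable (fun s : ℝ => (a - s) ^ (p - 1)) volume 0 a := by
    simpa using ((intervalIntegrable_rpow' (a := 0) (b := a) (by linarith)).comp_sub_left a).symm
  exact (hkernel.div_const _).mul_continuousOn (by rwa [uIcc_of_le ha])

lemma riemannLiouville_kernel_nonneg (hp : 0 < p) {s : ℝ} (hs : s ≤ a) :
    0 ≤ (a - s) ^ (p - 1) / Real.Gamma p :=
  div_nonneg (Real.rpow_nonneg (sub_nonneg.2 hs) _) (Real.Gamma_pos_of_pos hp).le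

lemma abs_riemannLiouville_sub_le {K : ℝ} (hp : 0 < p) (ha : 0 ≤ a)
    (hh₁ : ContinuousOn h₁ (Icc 0 a)) (hh₂ : ContinuousOn h₂ (Icc 0 a))
    (hg : ContinuousOn g (Icc 0 a)) (hbound : ∀ s ∈ Icc 0 a, |h₁ s - h₂ s| ≤ K * g s) :
    |riemannLiouville p h₁ a - riemannLiouville p h₂ a| ≤ K * riemannLiouville p g a := by
  have i₁ := intervalIntegrable_riemannLiouville_integrand hp ha hh₁
  have i₂ := intervalIntegrable_riemannLiouville_integrand hp ha hh₂
  have ig := intervalIntegrable_riemannLiouville_integrand hp ha hg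
  unfold riemannLiouville
  rw [← intervalIntegral.integral_sub i₁ i₂, ← intervalIntegral.integral_const_mul]
  refine (intervalIntegral.abs_integral_le_integral_abs ha).trans
    (intervalIntegral.integral_mono_on ha (i₁.sub i₂).abs (ig.const_mul K) fun s hs => ?_)
  have hw := riemannLiouville_kernel_nonneg hp hs.2
  rw [← mul_sub, abs_mul, abs_of_nonneg hw, mul_left_comm]
  exact mul_le_mul_of_nonneg_left (hbound s hs) hw

lemma riemannLiouville_le_of_le {t : ℝ} (hp : 1 ≤ p) (ht : 0 ≤ t) (hta : t ≤ a)
    (hg : ContinuousOn g (Icc 0 a)) (hg0 : ∀ s ∈ Icc 0 a, 0 ≤ g s) :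
    riemannLiouville p g t ≤ riemannLiouville p g a := by
  have hp₀ : 0 < p := by linarith
  have ia := intervalIntegrable_riemannLiouville_integrand hp₀ (ht.trans hta) hg
  have ia₀ : IntervalIntegrable (fun s => (a - s) ^ (p - 1) / Real.Gamma p * g s) volume 0 t :=
    ia.mono_set (by rw [uIcc_of_le ht, uIcc_of_le (ht.trans hta)]; exact Icc_subset_Icc_right hta)
  have ia₁ : IntervalIntegrable (fun s => (a - s) ^ (p - 1) / Real.Gamma p * g s) volume t a :=
    ia.mono_set (by rw [uIcc_of_le hta, uIcc_of_le (ht.trans hta)]; exact Icc_subset_Icc_left ht)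
  calc riemannLiouville p g t
      ≤ ∫ s in (0:ℝ)..t, (a - s) ^ (p - 1) / Real.Gamma p * g s :=
        intervalIntegral.integral_mono_on ht (intervalIntegrable_riemannLiouville_integrand hp₀ ht
          (hg.mono (Icc_subset_Icc_right hta))) ia₀ fun s hs => by
            have := hg0 s ⟨hs.1, hs.2.trans hta⟩
            have := (Real.Gamma_pos_of_pos hp₀).le
            gcongr
            linarith [hs.2]
    _ ≤ (∫ s in (0:ℝ)..t, (a - s) ^ (p - 1) / Real.Gamma p * g s) +
          ∫ s in t..a, (a - s) ^ (p - 1) / Real.Gamma p * g s :=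
        le_add_of_nonneg_right (intervalIntegral.integral_nonneg hta fun s hs =>
          mul_nonneg (riemannLiouville_kernel_nonneg hp₀ hs.2) (hg0 s ⟨ht.trans hs.1, hs.2⟩))
    _ = riemannLiouville p g a := intervalIntegral.integral_add_adjacent_intervals ia₀ ia₁

lemma mul_riemannLiouville_add_one_add_mul (hp : 0 < p) (ha : 0 ≤ a) (B C : ℝ)
    (hg : ContinuousOn g (Icc 0 a)) :
    B * riemannLiouville (p + 1) g a + C * riemannLiouville p g a =
      ∫ s in (0:ℝ)..a, (a - s) ^ (p - 1) / Real.Gamma (p + 1) * (p * C + B * (a - s)) * g s := by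
  have i₁ := intervalIntegrable_riemannLiouville_integrand (p := p + 1) (by linarith) ha hg
  have i₂ := intervalIntegrable_riemannLiouville_integrand hp ha hg
  unfold riemannLiouville
  rw [← intervalIntegral.integral_const_mul, ← intervalIntegral.integral_const_mul,
    ← intervalIntegral.integral_add (i₁.const_mul B) (i₂.const_mul C)]
  refine intervalIntegral.integral_congr fun s hs => ?_
  rw [uIcc_of_le ha] at hs
  have hpow : (a - s) ^ (p + 1 - 1) = (a - s) ^ (p - 1) * (a - s) := by
    rw [add_sub_cancel_right, ← Real.rpow_add_one' (by linarith [hs.2]) (by simp; linarith),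
      sub_add_cancel]
  rw [Real.Gamma_add_one hp.ne', hpow]
  field_simp
  ring

end RiemannLiouville

lemma abs_sum_mul_sub_le {ι : Type*} (s : Finset ι) (c u v r : ι → ℝ) {K : ℝ}
    (h : ∀ i ∈ s, |u i - v i| ≤ K * r i) :
    |∑ i ∈ s, c i * u i - ∑ i ∈ s, c i * v i| ≤ K * ∑ i ∈ s, |c i| * r i := by
  rw [← Finset.sum_sub_distrib, Finset.mul_sum]
  refine (Finset.abs_sum_le_sum_abs _ _).trans (Finset.sum_le_sum fun i hi => ?_)
  rw [← mul_sub, abs_mul, mul_left_comm]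
  exact mul_le_mul_of_nonneg_left (h i hi) (abs_nonneg _)

lemma abs_affine_combination_sub_le (a a' b b' c c' d d' e e' k k' u w : ℝ) :
    |(a + u * (-b + c + d) + w * (-e + k)) - (a' + u * (-b' + c' + d') + w * (-e' + k'))| ≤
      |a - a'| + |u| * (|b - b'| + |c - c'| + |d - d'|) + |w| * (|e - e'| + |k - k'|) := by
  calc _ = |(a - a') + u * (-(b - b') + (c - c') + (d - d')) + w * (-(e - e') + (k - k'))| := by
        ring_nf
    _ ≤ |a - a'| + |u| * |-(b - b') + (c - c') + (d - d')| + |w| * |-(e - e') + (k - k')| := by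
        simpa only [abs_mul] using abs_add_three (a - a')
          (u * (-(b - b') + (c - c') + (d - d'))) (w * (-(e - e') + (k - k')))
    _ ≤ _ := by
        gcongr
        · simpa only [abs_neg] using abs_add_three (-(b - b')) (c - c') (d - d')
        · simpa only [abs_neg] using abs_add_le (-(e - e')) (k - k')

lemma abs_mul_add_mul_div_le {A b c d t : ℝ} (ht : t ∈ Icc (0:ℝ) 1) :
    |A * (c + 2 * b * t) / (2 * d * b)| ≤ |A| * (|c| + 2 * |b|) / (2 * |d * b|) := by
  have ht' : |t| ≤ 1 := abs_le.2 ⟨by linarith [ht.1], ht.2⟩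
  have hnum : |c + 2 * b * t| ≤ |c| + 2 * |b| :=
    calc |c + 2 * b * t| ≤ |c| + 2 * |b| * |t| := by
          simpa only [abs_mul, abs_two] using abs_add_le c (2 * b * t)
      _ ≤ |c| + 2 * |b| := by nlinarith [abs_nonneg b]
  rw [mul_assoc (2:ℝ) d b, abs_div, abs_mul A, abs_mul 2, abs_two]
  gcongr

lemma mem_Icc_of_lt_add_one {η : ℕ → ℝ} {n : ℕ} {a b : ℝ}
    (hmono : ∀ i, 1 ≤ i → i < n → η i < η (i + 1)) (ha : a ≤ η 1) (hb : η n ≤ b) :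
    ∀ i ∈ Finset.Icc 1 n, η i ∈ Icc a b := by
  have hm : MonotoneOn η (Icc 1 n) := monotoneOn_of_le_succ ordConnected_Icc
    fun i _ hi hi' => by
      simp only [Order.succ_eq_add_one, mem_Icc] at hi hi'
      exact (hmono i hi.1 (by omega)).le
  intro i hi
  rw [Finset.mem_Icc] at hi
  exact ⟨ha.trans (hm ⟨le_rfl, hi.1.trans hi.2⟩ ⟨hi.1, hi.2⟩ hi.1),
    (hm ⟨hi.1, hi.2⟩ ⟨hi.1.trans hi.2, le_rfl⟩ hi.2).trans hb⟩

section Operator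

variable {q σ ν ξ : ℝ} {n : ℕ} {η α β γ : ℕ → ℝ}

noncomputable def greenOperator (q σ ν ξ : ℝ) (n : ℕ) (η α β γ : ℕ → ℝ) (h : ℝ → ℝ)
    (t : ℝ) : ℝ :=
  riemannLiouville q h t +
    1 / Δ₂ n η β γ * (-riemannLiouville q h 1 +
      ∑ i ∈ Finset.Icc 1 n, β i * riemannLiouville (q + 1) h (η i) +
      ∑ i ∈ Finset.Icc 1 n, γ i * riemannLiouville q h (η i)) +
    Real.Gamma (2 - σ) * Real.Gamma (2 - ν) * (Δ₃ n η β γ + 2 * Δ₂ n η β γ * t) /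
        (2 * Δ₁ σ ν ξ n η α * Δ₂ n η β γ) *
      (-riemannLiouville (q - σ) h ξ +
        ∑ i ∈ Finset.Icc 1 n, α i * riemannLiouville (q - ν) h (η i))

lemma opA_eq_greenOperator (f : ℝ → ℝ → ℝ) (x : ℝ → ℝ) :
    opA q σ ν ξ n η α β γ f x = greenOperator q σ ν ξ n η α β γ (fun s => f s (x s)) := by
  ext t
  simp only [opA, greenOperator, riemannLiouville, add_sub_cancel_right]

lemma Φ_eq_riemannLiouville {g : ℝ → ℝ} (hq : 0 < q) (hη : ∀ i ∈ Finset.Icc 1 n, η i ∈ Icc 0 1)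
    (hg : ContinuousOn g (Icc 0 1)) :
    Φ q σ ν ξ n η α β γ g = riemannLiouville q g 1 +
      1 / |Δ₂ n η β γ| * (riemannLiouville q g 1 +
        ∑ i ∈ Finset.Icc 1 n, |β i| * riemannLiouville (q + 1) g (η i) +
        ∑ i ∈ Finset.Icc 1 n, |γ i| * riemannLiouville q g (η i)) +
      Real.Gamma (2 - σ) * Real.Gamma (2 - ν) * (|Δ₃ n η β γ| + 2 * |Δ₂ n η β γ|) /
          (2 * |Δ₁ σ ν ξ n η α * Δ₂ n η β γ|) *
        (riemannLiouville (q - σ) g ξ +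
          ∑ i ∈ Finset.Icc 1 n, |α i| * riemannLiouville (q - ν) g (η i)) := by
  have hcomb : ∑ i ∈ Finset.Icc 1 n, |β i| * riemannLiouville (q + 1) g (η i) +
      ∑ i ∈ Finset.Icc 1 n, |γ i| * riemannLiouville q g (η i) =
      ∑ i ∈ Finset.Icc 1 n, ∫ s in (0:ℝ)..η i, (η i - s) ^ (q - 1) / Real.Gamma (q + 1) *
        (q * |γ i| + |β i| * (η i - s)) * g s := by
    rw [← Finset.sum_add_distrib]
    exact Finset.sum_congr rfl fun i hi => mul_riemannLiouville_add_one_add_mul hq (hη i hi).1 _ _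
      (hg.mono (Icc_subset_Icc_right (hη i hi).2))
  rw [Φ, ← hcomb]
  unfold riemannLiouville
  ring

lemma abs_greenOperator_sub_le {h₁ h₂ g : ℝ → ℝ} {K t : ℝ} (hq : 1 < q) (hσ : σ ≤ 1) (hν : ν ≤ 1)
    (hξ : ξ ∈ Icc 0 1) (hη : ∀ i ∈ Finset.Icc 1 n, η i ∈ Icc 0 1)
    (hh₁ : ContinuousOn h₁ (Icc 0 1)) (hh₂ : ContinuousOn h₂ (Icc 0 1))
    (hg : ContinuousOn g (Icc 0 1)) (hg0 : ∀ s ∈ Icc 0 1, 0 ≤ g s) (hK : 0 ≤ K)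
    (hbound : ∀ s ∈ Icc 0 1, |h₁ s - h₂ s| ≤ K * g s) (ht : t ∈ Icc 0 1) :
    |greenOperator q σ ν ξ n η α β γ h₁ t - greenOperator q σ ν ξ n η α β γ h₂ t| ≤
      K * Φ q σ ν ξ n η α β γ g := by
  have hD : ∀ p, 0 < p → ∀ a ∈ Icc (0:ℝ) 1,
      |riemannLiouville p h₁ a - riemannLiouville p h₂ a| ≤ K * riemannLiouville p g a :=
    fun p hp a ha => abs_riemannLiouville_sub_le hp ha.1 (hh₁.mono (Icc_subset_Icc_right ha.2))
      (hh₂.mono (Icc_subset_Icc_right ha.2)) (hg.mono (Icc_subset_Icc_right ha.2))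
      fun s hs => hbound s ⟨hs.1, hs.2.trans ha.2⟩
  have hq₀ : 0 < q := by linarith
  have hqσ : 0 < q - σ := by linarith
  have hqν : 0 < q - ν := by linarith
  have hDt : |riemannLiouville q h₁ t - riemannLiouville q h₂ t| ≤ K * riemannLiouville q g 1 :=
    (hD q hq₀ t ht).trans (mul_le_mul_of_nonneg_left
      (riemannLiouville_le_of_le hq.le ht.1 ht.2 hg hg0) hK)
  have hsum : ∀ p, 0 < p → ∀ c : ℕ → ℝ,
      |∑ i ∈ Finset.Icc 1 n, c i * riemannLiouville p h₁ (η i) -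
        ∑ i ∈ Finset.Icc 1 n, c i * riemannLiouville p h₂ (η i)| ≤
      K * ∑ i ∈ Finset.Icc 1 n, |c i| * riemannLiouville p g (η i) :=
    fun p hp c => abs_sum_mul_sub_le _ c _ _ _ fun i hi => hD p hp (η i) (hη i hi)
  have hcoeff := abs_mul_add_mul_div_le (A := Real.Gamma (2 - σ) * Real.Gamma (2 - ν))
    (b := Δ₂ n η β γ) (c := Δ₃ n η β γ) (d := Δ₁ σ ν ξ n η α) ht
  rw [abs_of_pos (mul_pos (Real.Gamma_pos_of_pos (by linarith))
    (Real.Gamma_pos_of_pos (by linarith)))] at hcoeff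
  unfold greenOperator
  refine (abs_affine_combination_sub_le ..).trans ?_
  rw [Φ_eq_riemannLiouville hq₀ hη hg, abs_div, abs_one]
  calc _ ≤ K * riemannLiouville q g 1 +
        1 / |Δ₂ n η β γ| * (K * riemannLiouville q g 1 +
          K * ∑ i ∈ Finset.Icc 1 n, |β i| * riemannLiouville (q + 1) g (η i) +
          K * ∑ i ∈ Finset.Icc 1 n, |γ i| * riemannLiouville q g (η i)) +
        Real.Gamma (2 - σ) * Real.Gamma (2 - ν) * (|Δ₃ n η β γ| + 2 * |Δ₂ n η β γ|) /
            (2 * |Δ₁ σ ν ξ n η α * Δ₂ n η β γ|) *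
          (K * riemannLiouville (q - σ) g ξ +
            K * ∑ i ∈ Finset.Icc 1 n, |α i| * riemannLiouville (q - ν) g (η i)) := by
        gcongr
        · exact hD q hq₀ 1 ⟨zero_le_one, le_rfl⟩
        · exact hsum (q + 1) (by linarith) β
        · exact hsum q hq₀ γ
        · exact (abs_nonneg _).trans hcoeff
        · exact hD (q - σ) hqσ ξ hξ
        · exact hsum (q - ν) hqν α
    _ = _ := by ring

end Operator

lemma abs_IccExtend_sub_le_norm {a b : ℝ} (hab : a ≤ b) (x y : C(Icc a b, ℝ)) {s : ℝ}
    (hs : s ∈ Icc a b) : |IccExtend hab x s - IccExtend hab y s| ≤ ‖x - y‖ := by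
  rw [IccExtend_of_mem _ _ hs, IccExtend_of_mem _ _ hs]
  exact (x - y).norm_coe_le_norm ⟨s, hs⟩

lemma ContinuousOn.comp_IccExtend {E F : Type*} [TopologicalSpace E] [TopologicalSpace F]
    {a b : ℝ} (hab : a ≤ b) {f : ℝ → E → F}
    (hf : ContinuousOn (Function.uncurry f) (Icc a b ×ˢ univ))
    (x : C(Icc a b, E)) : ContinuousOn (fun s => f s (IccExtend hab x s)) (Icc a b) :=
  hf.comp (continuous_id.prodMk (x.continuous.comp continuous_projIcc)).continuousOn
    fun _ hs => ⟨hs, trivial⟩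

theorem thm32_estimate_general (q σ ν ξ : ℝ) (n : ℕ) (η α β γ : ℕ → ℝ)
    (hq1 : 1 < q) (hσ1 : σ ≤ 1) (hν1 : ν ≤ 1)
    (hn : 1 ≤ n) (hξ : 0 < ξ) (hξη : ξ < η 1)
    (hηmono : ∀ i, 1 ≤ i → i < n → η i < η (i + 1)) (hηn : η n < 1)
    (f : ℝ → ℝ → ℝ)
    (hf : ContinuousOn (Function.uncurry f) (Set.Icc 0 1 ×ˢ Set.univ))
    (g : ℝ → ℝ) (hg : ContinuousOn g (Set.Icc 0 1))
    (hgpos : ∀ t ∈ Set.Icc (0:ℝ) 1, 0 ≤ g t)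
    (hΦ : 0 < Φ q σ ν ξ n η α β γ g)
    (hH2 : ∀ t ∈ Set.Icc (0:ℝ) 1, ∀ x y : ℝ,
      |f t x - f t y| ≤ g t * (Φ q σ ν ξ n η α β γ g)⁻¹ * Real.log (1 + |x - y|)) :
    ∀ x y : C(Set.Icc (0:ℝ) 1, ℝ), ∀ t ∈ Set.Icc (0:ℝ) 1,
      |opA q σ ν ξ n η α β γ f (Set.IccExtend zero_le_one ⇑x) t -
        opA q σ ν ξ n η α β γ f (Set.IccExtend zero_le_one ⇑y) t| ≤
      Real.log (1 + ‖x - y‖) := by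
  intro x y t ht
  set Φ₀ := Φ q σ ν ξ n η α β γ g
  set L := Real.log (1 + ‖x - y‖)
  have hη := mem_Icc_of_lt_add_one hηmono hξη.le hηn.le
  have hξ1 : ξ ≤ 1 := hξη.le.trans (hη 1 (Finset.mem_Icc.2 ⟨le_rfl, hn⟩)).2
  have hK : 0 ≤ Φ₀⁻¹ * L :=
    mul_nonneg (inv_nonneg.2 hΦ.le) (Real.log_nonneg (by linarith [norm_nonneg (x - y)]))
  have hfxy : ∀ s ∈ Icc (0:ℝ) 1,
      |f s (IccExtend zero_le_one x s) - f s (IccExtend zero_le_one y s)| ≤ Φ₀⁻¹ * L * g s :=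
    fun s hs => by
      have hlog : Real.log (1 + |IccExtend zero_le_one x s - IccExtend zero_le_one y s|) ≤ L :=
        Real.log_le_log (by positivity) (by linarith [abs_IccExtend_sub_le_norm zero_le_one x y hs])
      calc _ ≤ g s * Φ₀⁻¹ *
            Real.log (1 + |IccExtend zero_le_one x s - IccExtend zero_le_one y s|) := hH2 s hs _ _
        _ ≤ g s * Φ₀⁻¹ * L :=
            mul_le_mul_of_nonneg_left hlog (mul_nonneg (hgpos s hs) (inv_nonneg.2 hΦ.le))
        _ = Φ₀⁻¹ * L * g s := by ring
  rw [opA_eq_greenOperator, opA_eq_greenOperator]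
  calc _ ≤ Φ₀⁻¹ * L * Φ₀ :=
        abs_greenOperator_sub_le hq1 hσ1 hν1 ⟨hξ.le, hξ1⟩
          (fun i hi => Icc_subset_Icc_left hξ.le (hη i hi)) (hf.comp_IccExtend _ x)
          (hf.comp_IccExtend _ y) hg hgpos hK hfxy ht
    _ = L := by field_simp

theorem thm32_estimate (q σ ν ξ : ℝ) (n : ℕ) (η α β γ : ℕ → ℝ)
    (hq1 : 1 < q) (hq2 : q ≤ 2) (hσ0 : 0 < σ) (hσ1 : σ ≤ 1) (hν0 : 0 < ν) (hν1 : ν ≤ 1)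
    (hn : 1 ≤ n) (hξ : 0 < ξ) (hξη : ξ < η 1)
    (hηmono : ∀ i, 1 ≤ i → i < n → η i < η (i + 1)) (hηn : η n < 1)
    (hΔ₁ : Δ₁ σ ν ξ n η α ≠ 0) (hΔ₂ : Δ₂ n η β γ ≠ 0)
    (f : ℝ → ℝ → ℝ)
    (hf : ContinuousOn (Function.uncurry f) (Set.Icc 0 1 ×ˢ Set.univ))
    (g : ℝ → ℝ) (hg : ContinuousOn g (Set.Icc 0 1))
    (hgpos : ∀ t ∈ Set.Icc (0:ℝ) 1, 0 ≤ g t)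
    (hΦ : 0 < Φ q σ ν ξ n η α β γ g)
    (hH2 : ∀ t ∈ Set.Icc (0:ℝ) 1, ∀ x y : ℝ,
      |f t x - f t y| ≤ g t * (Φ q σ ν ξ n η α β γ g)⁻¹ * Real.log (1 + |x - y|)) :
    ∀ x y : C(Set.Icc (0:ℝ) 1, ℝ), ∀ t ∈ Set.Icc (0:ℝ) 1,
      |opA q σ ν ξ n η α β γ f (Set.IccExtend zero_le_one ⇑x) t -
        opA q σ ν ξ n η α β γ f (Set.IccExtend zero_le_one ⇑y) t| ≤
      Real.log (1 + ‖x - y‖) :=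
  thm32_estimate_general q σ ν ξ n η α β γ hq1 hσ1 hν1 hn hξ hξη hηmono hηn f hf g hg hgpos hΦ hH2
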